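/- (Distribution formula for weighted (h,q)-Genocchi polynomials) Let q be a real number with 0 < q < 1, let α > 0 be real, let h be a positive integer, let x ≥ 0 be real, let a be an odd positive integer, and let n be a positive integer. Then G̃_{n,q}^{(α,h)}(x) = ([2]_q / [2]_{q^a}) · [a]_{q^α}^{n-1} · ∑_{i=0}^{a-1} (-1)^i q^{ih} G̃_{n,q^a}^{(α,h)}((x+i)/a). -/

import Mathlib

/-- The `q`-number `[x]_q = (1 - q^x)/(1 - q)` (real exponent, via `rpow`). -/
noncomputable def qnum (q x : ℝ) : ℝ := (1 - q ^ x) / (1 - q)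

/-- The weighted `(h,q)`-Genocchi polynomial
`G̃_{n,q}^{(α,h)}(x) = n·[2]_q·∑_{m≥0} (-1)^m q^{mh} [m+x]_{q^α}^{n-1}`
(for `n = 0` the prefactor `n` makes it `0`). -/
noncomputable def hqGenocchi (q α : ℝ) (h n : ℕ) (x : ℝ) : ℝ :=
  (n : ℝ) * qnum q 2 *
    ∑' m : ℕ, (-1 : ℝ) ^ m * q ^ (m * h) * (qnum (q ^ α) ((m : ℝ) + x)) ^ (n - 1)


/-! Split the defining series according to the residue of `m` modulo `a`, writing
`m = i + a k`. Since `a` is odd, `(-1)^m = (-1)^i (-1)^k`, and the multiplication rule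
`[a y]_Q = [a]_Q [y]_{Q^a}` turns `[m + x]_{q^α}` into `[a]_{q^α} [k + (x + i)/a]_{(q^a)^α}`,
so the `i`-th residue class is a multiple of the series defining
`G̃_{n,q^a}^{(α,h)}((x + i)/a)`. -/

open Finset

lemma tsum_eq_sum_range_tsum_add_mul {R : Type*} [AddCommGroup R] [UniformSpace R]
    [IsUniformAddGroup R] [CompleteSpace R] [T0Space R] {f : ℕ → R} (hf : Summable f)
    {a : ℕ} (ha : 0 < a) :
    ∑' m, f m = ∑ i ∈ range a, ∑' k, f (i + a * k) := by
  obtain ⟨b, rfl⟩ := Nat.exists_eq_add_one_of_ne_zero ha.ne'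
  rw [Nat.sumByResidueClasses hf (b + 1), Finset.sum_range]
  -- `ZMod (b + 1)` is `Fin (b + 1)` by definition
  rfl

section qnum

variable {Q : ℝ}

lemma qnum_nonneg (hQ0 : 0 ≤ Q) (hQ1 : Q ≤ 1) {u : ℝ} (hu : 0 ≤ u) : 0 ≤ qnum Q u :=
  div_nonneg (sub_nonneg.2 (Real.rpow_le_one hQ0 hQ1 hu)) (sub_nonneg.2 hQ1)

lemma qnum_pos (hQ0 : 0 ≤ Q) (hQ1 : Q < 1) {u : ℝ} (hu : 0 < u) : 0 < qnum Q u :=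
  div_pos (sub_pos.2 (Real.rpow_lt_one hQ0 hQ1 hu)) (sub_pos.2 hQ1)

lemma qnum_le_inv_one_sub (hQ0 : 0 ≤ Q) (hQ1 : Q < 1) (u : ℝ) : qnum Q u ≤ (1 - Q)⁻¹ := by
  rw [qnum, div_eq_mul_inv]
  exact mul_le_of_le_one_left (inv_nonneg.2 (sub_nonneg.2 hQ1.le))
    (sub_le_self 1 (Real.rpow_nonneg hQ0 u))

lemma qnum_mul_qnum_rpow (hQ : 0 ≤ Q) (b u : ℝ) :
    qnum Q b * qnum (Q ^ b) u = qnum Q (b * u) := by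
  rw [qnum, qnum, qnum, Real.rpow_mul hQ]
  by_cases hb : 1 - Q ^ b = 0
  · rw [hb, ← sub_eq_zero.1 hb, Real.one_rpow]
    simp
  · field_simp

end qnum

noncomputable def hqGenocchiTerm (q α : ℝ) (h n : ℕ) (x : ℝ) (m : ℕ) : ℝ :=
  (-1 : ℝ) ^ m * q ^ (m * h) * qnum (q ^ α) ((m : ℝ) + x) ^ (n - 1)

lemma hqGenocchi_eq_tsum (q α : ℝ) (h n : ℕ) (x : ℝ) :
    hqGenocchi q α h n x = n * qnum q 2 * ∑' m, hqGenocchiTerm q α h n x m :=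
  rfl

lemma summable_hqGenocchiTerm {q α : ℝ} (hq0 : 0 < q) (hq1 : q < 1) (hα : 0 < α)
    {h : ℕ} (hh : 0 < h) (n : ℕ) {x : ℝ} (hx : 0 ≤ x) :
    Summable (hqGenocchiTerm q α h n x) := by
  have hqα0 : 0 ≤ q ^ α := Real.rpow_nonneg hq0.le α
  have hqα1 : q ^ α < 1 := Real.rpow_lt_one hq0.le hq1 hα
  have hgeom : Summable fun m : ℕ => (1 - q ^ α)⁻¹ ^ (n - 1) * (q ^ h) ^ m :=
    (summable_geometric_of_lt_one (pow_nonneg hq0.le h) (pow_lt_one₀ hq0.le hq1 hh.ne')).mul_left _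
  refine Summable.of_norm (hgeom.of_nonneg_of_le (fun m => norm_nonneg _) fun m => ?_)
  have hnonneg : 0 ≤ qnum (q ^ α) ((m : ℝ) + x) := qnum_nonneg hqα0 hqα1.le (by positivity)
  rw [hqGenocchiTerm, norm_mul, norm_mul, norm_pow, norm_neg, norm_one, one_pow, one_mul,
    Real.norm_of_nonneg (by positivity), Real.norm_of_nonneg (by positivity), mul_comm m h,
    pow_mul, mul_comm]
  gcongr
  exact qnum_le_inv_one_sub hqα0 hqα1 _

lemma hqGenocchiTerm_add_mul {q : ℝ} (hq : 0 ≤ q) (α : ℝ) (h n : ℕ) (x : ℝ) {a : ℕ}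
    (ha : Odd a) (i k : ℕ) :
    hqGenocchiTerm q α h n x (i + a * k) =
      qnum (q ^ α) a ^ (n - 1) * ((-1 : ℝ) ^ i * q ^ (i * h)) *
        hqGenocchiTerm (q ^ a) α h n ((x + i) / a) k := by
  have haR : (a : ℝ) ≠ 0 := Nat.cast_ne_zero.2 ha.pos.ne'
  have hqnum : qnum (q ^ α) (((i + a * k : ℕ) : ℝ) + x) =
      qnum (q ^ α) a * qnum ((q ^ a) ^ α) ((k : ℝ) + (x + i) / a) := by
    rw [← Real.rpow_pow_comm hq, ← Real.rpow_natCast,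
      qnum_mul_qnum_rpow (Real.rpow_nonneg hq α)]
    congr 1
    push_cast
    field_simp
    ring
  have hsign : (-1 : ℝ) ^ (i + a * k) = (-1) ^ i * (-1) ^ k := by
    rw [pow_add, pow_mul, ha.neg_one_pow]
  have hpow : q ^ ((i + a * k) * h) = q ^ (i * h) * (q ^ a) ^ (k * h) := by
    rw [← pow_mul, ← pow_add]
    ring_nf
  rw [hqGenocchiTerm, hqGenocchiTerm, hqnum, hsign, hpow, mul_pow]
  ring

theorem stmt6_general (q α x : ℝ) (hq0 : 0 < q) (hq1 : q < 1) (hα : 0 < α) (h : ℕ) (hh : 0 < h)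
    (hx : 0 ≤ x) (a : ℕ) (hao : Odd a) (n : ℕ) :
    hqGenocchi q α h n x =
      (qnum q 2 / qnum (q ^ a) 2) * (qnum (q ^ α) (a : ℝ)) ^ (n - 1) *
        ∑ i ∈ Finset.range a, (-1 : ℝ) ^ i * q ^ (i * h) *
          hqGenocchi (q ^ a) α h n ((x + (i : ℝ)) / (a : ℝ)) := by
  have hqa : qnum (q ^ a) 2 ≠ 0 :=
    (qnum_pos (pow_nonneg hq0.le a) (pow_lt_one₀ hq0.le hq1 hao.pos.ne') two_pos).ne'
  rw [hqGenocchi_eq_tsum,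
    tsum_eq_sum_range_tsum_add_mul (summable_hqGenocchiTerm hq0 hq1 hα hh n hx) hao.pos]
  simp only [hqGenocchiTerm_add_mul hq0.le α h n x hao, tsum_mul_left, hqGenocchi_eq_tsum,
    mul_sum]
  refine sum_congr rfl fun i _ => ?_
  field_simp

theorem stmt6 (q α x : ℝ) (hq0 : 0 < q) (hq1 : q < 1) (hα : 0 < α) (h : ℕ) (hh : 0 < h)
    (hx : 0 ≤ x) (a : ℕ) (ha : 0 < a) (hao : Odd a) (n : ℕ) (hn : 0 < n) :
    hqGenocchi q α h n x =
      (qnum q 2 / qnum (q ^ a) 2) * (qnum (q ^ α) (a : ℝ)) ^ (n - 1) *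
        ∑ i ∈ Finset.range a, (-1 : ℝ) ^ i * q ^ (i * h) *
          hqGenocchi (q ^ a) α h n ((x + (i : ℝ)) / (a : ℝ)) :=
  stmt6_general q α x hq0 hq1 hα h hh hx a hao n
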